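/- arXiv:1406.2052 — 6 statements merged into one kernel-verified Lean document; each statement's English description precedes it below -/
import Mathlib

section
/- Let Q be a convex polytope in ℝ^D with vertices in ℤ^D, let E be an edge of Q, and let A ⊆ L(Q). Suppose A ∩ E = T_E(S), where S ⊆ ℤ and T_E : ℝ → ℝ^D is an injective affine transformation. Then there exists an injective affine transformation T' : ℝ → ℝ^D such that (A+A) ∩ (E+E) = T'(S+S). -/
/-!
If `a + b = e + e'` with `a, b ∈ Q` and `e, e'` in the face of `Q` on which a functional `f`
attains its maximum, then `f a + f b` is maximal, which forces `a` and `b` into that face; hence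
`(A + A) ∩ (E + E) = (A ∩ E) + (A ∩ E)`. An affine map satisfies `T s + T t = T (s + t) + T 0`,
so `T(S) + T(S)` is the image of `S + S` under the injective affine map `x ↦ T x + T 0`.
-/

open scoped Pointwise

noncomputable section

/-- Points of `ℝ^D` with the Euclidean metric. -/
abbrev Pt (D : ℕ) := EuclideanSpace ℝ (Fin D)

/-- `L(S)`: the set of lattice points of `S`, i.e. points of `S` all of whose
coordinates are integers. -/
def latticePts {D : ℕ} (S : Set (Pt D)) : Set (Pt D) :=
  {x | x ∈ S ∧ ∀ i, ∃ z : ℤ, x i = (z : ℝ)}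

/-- A convex polytope: the convex hull of a finite set of points. -/
def IsPolytope {D : ℕ} (P : Set (Pt D)) : Prop :=
  ∃ V : Set (Pt D), V.Finite ∧ P = convexHull ℝ V

/-- A convex polytope whose vertices (extreme points) all lie in `ℤ^D`. -/
def IsLatticePolytope {D : ℕ} (P : Set (Pt D)) : Prop :=
  IsPolytope P ∧ ∀ v ∈ Set.extremePoints ℝ P, ∀ i, ∃ z : ℤ, v i = (z : ℝ)

/-- `u` and `v` are strictly antipodal vertices of `Q`: there are parallel supporting
hyperplanes `H₁, H₂` of `Q` (with common normal functional `f`) such that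
`H₁ ∩ Q = {u}` and `H₂ ∩ Q = {v}`. -/
def StrictlyAntipodal {D : ℕ} (Q : Set (Pt D)) (u v : Pt D) : Prop :=
  ∃ f : Pt D →ₗ[ℝ] ℝ, f ≠ 0 ∧
    {x | x ∈ Q ∧ ∀ y ∈ Q, f y ≤ f x} = {u} ∧
    {x | x ∈ Q ∧ ∀ y ∈ Q, f x ≤ f y} = {v}

/-- The supporting cone of `Q` at `v`: `v + ⋃_{λ ≥ 0} λ (Q - v)`. -/
def suppCone {D : ℕ} (Q : Set (Pt D)) (v : Pt D) : Set (Pt D) :=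
  {v} + ⋃ (l : ℝ) (_ : 0 ≤ l), l • (Q - ({v} : Set (Pt D)))

/-- `Q` is locally point symmetric: its vertices can be partitioned into pairs
(given by a fixed-point-free involution `σ` of the vertex set) of strictly antipodal
vertices such that each pair `{u, v}` satisfies `C(u) - u = v - C(v)`. -/
def LocallyPointSymmetric {D : ℕ} (Q : Set (Pt D)) : Prop :=
  ∃ σ : Pt D → Pt D, ∀ v ∈ Set.extremePoints ℝ Q,
    σ v ∈ Set.extremePoints ℝ Q ∧ σ v ≠ v ∧ σ (σ v) = v ∧
    StrictlyAntipodal Q v (σ v) ∧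
    suppCone Q v - ({v} : Set (Pt D)) = ({σ v} : Set (Pt D)) - suppCone Q (σ v)

/-- `E` is an edge of `Q`: a 1-dimensional face, i.e. the intersection of `Q` with a
supporting hyperplane which is 1-dimensional. -/
def IsEdge {D : ℕ} (Q E : Set (Pt D)) : Prop :=
  (∃ f : Pt D →ₗ[ℝ] ℝ, f ≠ 0 ∧ E = {x | x ∈ Q ∧ ∀ y ∈ Q, f y ≤ f x}) ∧
    Module.finrank ℝ (affineSpan ℝ E).direction = 1

/-- `B_r(Q)`: lattice points of `Q` within distance `r` of some vertex of `Q`. -/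
def ballFringe {D : ℕ} (Q : Set (Pt D)) (r : ℝ) : Set (Pt D) :=
  {q | q ∈ latticePts Q ∧ ∃ v ∈ Set.extremePoints ℝ Q, dist q v ≤ r}

/-- `M_r(Q) = L(Q) \ B_r(Q)`: the middle lattice points of `Q`. -/
def middlePts {D : ℕ} (Q : Set (Pt D)) (r : ℝ) : Set (Pt D) :=
  latticePts Q \ ballFringe Q r

/-- `P` is point symmetric: `P = x - P` for some point `x`. -/
def PointSymmetric {D : ℕ} (P : Set (Pt D)) : Prop :=
  ∃ x : Pt D, P = ({x} : Set (Pt D)) - P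

section
variable {k V₁ V₂ : Type*} [Ring k] [AddCommGroup V₁] [Module k V₁] [AddCommGroup V₂] [Module k V₂]

theorem AffineMap.map_add_add_map_zero (T : V₁ →ᵃ[k] V₂) (x y : V₁) :
    T (x + y) + T 0 = T x + T y := by
  have hxy := T.map_vadd y x
  have hx := T.map_vadd 0 x
  simp only [vadd_eq_add, add_zero] at hxy hx
  rw [hxy, hx]
  abel

theorem AffineMap.injective_add_const {T : V₁ →ᵃ[k] V₂} (hT : Function.Injective T) (c : V₂) :
    Function.Injective (T + AffineMap.const k V₁ c) := fun _ _ hxy =>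
  hT (add_right_cancel hxy)

theorem AffineMap.image_add_image (T : V₁ →ᵃ[k] V₂) (s t : Set V₁) :
    T '' s + T '' t = (T + AffineMap.const k V₁ (T 0)) '' (s + t) := by
  rw [← Set.image2_add, ← Set.image2_add, Set.image_image2, Set.image2_image_left,
    Set.image2_image_right]
  exact Set.image2_congr fun x _ y _ => (T.map_add_add_map_zero x y).symm
end

section
variable {M : Type*} [AddCommGroup M] [Module ℝ M]

def maxFace (f : M →ₗ[ℝ] ℝ) (Q : Set M) : Set M := {x | x ∈ Q ∧ ∀ y ∈ Q, f y ≤ f x}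

variable {f : M →ₗ[ℝ] ℝ} {Q : Set M}

theorem mem_maxFace_of_le {x e : M} (hx : x ∈ Q) (he : e ∈ maxFace f Q) (hle : f e ≤ f x) :
    x ∈ maxFace f Q :=
  ⟨hx, fun y hy => (he.2 y hy).trans hle⟩

theorem add_inter_maxFace_add {A B : Set M} (hA : A ⊆ Q) (hB : B ⊆ Q) :
    (A + B) ∩ (maxFace f Q + maxFace f Q) = A ∩ maxFace f Q + B ∩ maxFace f Q := by
  ext x
  constructor
  · rintro ⟨⟨a, ha, b, hb, rfl⟩, e, he, e', he', hsum⟩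
    have hfsum : f e + f e' = f a + f b := by
      simpa only [map_add] using congrArg f hsum
    have hae := he.2 a (hA ha)
    have hbe' := he'.2 b (hB hb)
    exact ⟨a, ⟨ha, mem_maxFace_of_le (hA ha) he (by linarith)⟩,
      b, ⟨hb, mem_maxFace_of_le (hB hb) he' (by linarith)⟩, rfl⟩
  · rintro ⟨a, ⟨ha, haF⟩, b, ⟨hb, hbF⟩, rfl⟩
    exact ⟨Set.add_mem_add ha hb, Set.add_mem_add haF hbF⟩
end

theorem stmt6_general {D : ℕ} (Q : Set (Pt D))
    (E : Set (Pt D)) (hE : IsEdge Q E) (A : Set (Pt D)) (hA : A ⊆ latticePts Q)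
    (S : Set ℤ) (T : ℝ →ᵃ[ℝ] Pt D) (hT : Function.Injective T)
    (hAE : A ∩ E = ⇑T '' ((fun z : ℤ => (z : ℝ)) '' S)) :
    ∃ T' : ℝ →ᵃ[ℝ] Pt D, Function.Injective T' ∧
      (A + A) ∩ (E + E) = ⇑T' '' ((fun z : ℤ => (z : ℝ)) '' (S + S)) := by
  obtain ⟨⟨f, -, rfl⟩, -⟩ := hE
  change A ∩ maxFace f Q = _ at hAE
  have hAQ : A ⊆ Q := fun a ha => (hA ha).1
  refine ⟨T + AffineMap.const ℝ ℝ (T 0), AffineMap.injective_add_const hT _, ?_⟩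
  change (A + A) ∩ (maxFace f Q + maxFace f Q) = _
  rw [add_inter_maxFace_add hAQ hAQ, hAE, T.image_add_image]
  exact congrArg _ (Set.image_add (Int.castAddHom ℝ)).symm

/-- If `E` is an edge of a lattice polytope `Q`, `A ⊆ L(Q)`, and
`A ∩ E = T(S)` for an injective affine map `T : ℝ → ℝ^D` and `S ⊆ ℤ`, then there is an
injective affine map `T'` with `(A + A) ∩ (E + E) = T'(S + S)`. -/
theorem stmt6 {D : ℕ} (Q : Set (Pt D)) (hQ : IsLatticePolytope Q)
    (E : Set (Pt D)) (hE : IsEdge Q E) (A : Set (Pt D)) (hA : A ⊆ latticePts Q)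
    (S : Set ℤ) (T : ℝ →ᵃ[ℝ] Pt D) (hT : Function.Injective T)
    (hAE : A ∩ E = ⇑T '' ((fun z : ℤ => (z : ℝ)) '' S)) :
    ∃ T' : ℝ →ᵃ[ℝ] Pt D, Function.Injective T' ∧
      (A + A) ∩ (E + E) = ⇑T' '' ((fun z : ℤ => (z : ℝ)) '' (S + S)) :=
  stmt6_general Q E hE A hA S T hT hAE
end
end

section
/- Let Q be a locally point symmetric convex polytope in ℝ^D, let v₁ and v₂ be a pair of strictly antipodal vertices of Q, and let E₁ and E₂ be parallel edges of Q with v₁ ∈ E₁ and v₂ ∈ E₂. Then there exist parallel supporting hyperplanes H₁ and H₂ of Q such that H₁ ∩ Q = E₁ and H₂ ∩ Q = E₂. -/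
open scoped Pointwise

noncomputable section

/-! Local point symmetry `C(v₁) - v₁ = w - C(w)` turns a linear functional that is maximal on `Q`
at `v₁` into one that is minimal at the partner `w`, and conversely. Applied to a functional
exposing `v₁` this identifies `w` with `v₂`. Applied to the functional `f` exposing `E₂`, it
shows that `f` is minimal at `v₁`, and that `f` attains this minimum exactly at the points `x`
of `Q` with `x - v₁` parallel to `E₂`, i.e. to `E₁`; those points form `E₁`. -/

section SupportingCone

variable {D : ℕ} {Q : Set (Pt D)} {f : Pt D →ₗ[ℝ] ℝ} {u v x : Pt D}

lemma mem_suppCone : x ∈ suppCone Q v ↔ ∃ l : ℝ, 0 ≤ l ∧ ∃ q ∈ Q, x = v + l • (q - v) := by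
  simp only [suppCone, Set.singleton_add, Set.image_add_left, Set.mem_preimage,
    Set.mem_iUnion, Set.mem_smul_set, Set.sub_singleton, Set.mem_image]
  constructor
  · rintro ⟨l, hl, y, ⟨q, hq, rfl⟩, hy⟩
    exact ⟨l, hl, q, hq, by rw [hy]; abel⟩
  · rintro ⟨l, hl, q, hq, rfl⟩
    exact ⟨l, hl, q - v, ⟨q, hq, rfl⟩, by abel⟩

lemma subset_suppCone : Q ⊆ suppCone Q v :=
  fun q hq => mem_suppCone.mpr ⟨1, zero_le_one, q, hq, by simp⟩

lemma map_le_of_mem_suppCone (hv : ∀ y ∈ Q, f y ≤ f v) (hx : x ∈ suppCone Q v) :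
    f x ≤ f v := by
  obtain ⟨l, hl, q, hq, rfl⟩ := mem_suppCone.mp hx
  simpa [map_add, map_smul, map_sub] using mul_nonpos_of_nonneg_of_nonpos hl
    (sub_nonpos.mpr (hv q hq))

lemma direction_affineSpan_le_ker {V : Type*} [AddCommGroup V] [Module ℝ V]
    {P F : Set V} {g : V →ₗ[ℝ] ℝ} (hF : F = {x | x ∈ P ∧ ∀ y ∈ P, g y ≤ g x}) :
    (affineSpan ℝ F).direction ≤ LinearMap.ker g := by
  rw [direction_affineSpan, vectorSpan_def, Submodule.span_le]
  rintro _ ⟨a, ha, b, hb, rfl⟩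
  rw [hF] at ha hb
  simp only [SetLike.mem_coe, LinearMap.mem_ker, vsub_eq_sub, map_sub]
  exact sub_eq_zero.mpr ((hb.2 a ha.1).antisymm (ha.2 b hb.1))

lemma sub_mem_direction_of_mem_suppCone {F : Set (Pt D)}
    (hF : F = {x | x ∈ Q ∧ ∀ y ∈ Q, f y ≤ f x}) (hv : v ∈ F) (hx : x ∈ suppCone Q v)
    (hfx : f v ≤ f x) : x - v ∈ (affineSpan ℝ F).direction := by
  obtain ⟨l, hl, q, hq, rfl⟩ := mem_suppCone.mp hx
  have hvmax : ∀ y ∈ Q, f y ≤ f v := by rw [hF] at hv; exact hv.2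
  have hfq : l * (f q - f v) = 0 := by
    refine le_antisymm (mul_nonpos_of_nonneg_of_nonpos hl (sub_nonpos.mpr (hvmax q hq))) ?_
    simpa [map_add, map_smul, map_sub] using hfx
  rw [add_sub_cancel_left]
  rcases mul_eq_zero.mp hfq with hl0 | hfq
  · simp [hl0]
  · have hqF : q ∈ F := by
      rw [hF]
      exact ⟨hq, fun y hy => (hvmax y hy).trans (sub_eq_zero.mp hfq).ge⟩
    exact Submodule.smul_mem _ _ (AffineSubspace.vsub_mem_direction
      (subset_affineSpan ℝ F hqF) (subset_affineSpan ℝ F hv))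

lemma mem_of_sub_mem_direction {E : Set (Pt D)} (hE : E = {x | x ∈ Q ∧ ∀ y ∈ Q, f y ≤ f x})
    (hu : u ∈ E) (hx : x ∈ Q) (hxu : x - u ∈ (affineSpan ℝ E).direction) : x ∈ E := by
  have hfx : f x = f u := sub_eq_zero.mp (by simpa using direction_affineSpan_le_ker hE hxu)
  rw [hE] at hu ⊢
  exact ⟨hx, fun y hy => (hu.2 y hy).trans hfx.ge⟩

end SupportingCone

section OppositeCones

variable {D : ℕ} {Q : Set (Pt D)} {f : Pt D →ₗ[ℝ] ℝ} {u v w x : Pt D}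

lemma suppCone_sub_eq_symm
    (h : suppCone Q u - ({u} : Set (Pt D)) = ({w} : Set (Pt D)) - suppCone Q w) :
    suppCone Q w - ({w} : Set (Pt D)) = ({u} : Set (Pt D)) - suppCone Q u := by
  have h' := congrArg Neg.neg h
  rw [neg_sub, neg_sub] at h'
  exact h'.symm

lemma exists_mem_suppCone_sub_eq
    (h : suppCone Q u - ({u} : Set (Pt D)) = ({w} : Set (Pt D)) - suppCone Q w)
    (hx : x ∈ Q) : ∃ c ∈ suppCone Q w, x - u = w - c := by
  have hxu : x - u ∈ suppCone Q u - ({u} : Set (Pt D)) :=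
    Set.sub_mem_sub (subset_suppCone hx) rfl
  rw [h] at hxu
  obtain ⟨_, rfl, c, hc, hxc⟩ := hxu
  exact ⟨c, hc, hxc.symm⟩

lemma map_le_of_suppCone_sub_eq
    (h : suppCone Q u - ({u} : Set (Pt D)) = ({w} : Set (Pt D)) - suppCone Q w)
    (hu : ∀ y ∈ Q, f y ≤ f u) (hx : x ∈ Q) : f w ≤ f x := by
  obtain ⟨c, hc, hxc⟩ := exists_mem_suppCone_sub_eq (suppCone_sub_eq_symm h) hx
  have hfc := map_le_of_mem_suppCone hu hc
  have := congrArg f hxc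
  simp only [map_sub] at this
  linarith

lemma eq_of_strictlyAntipodal_of_suppCone_sub_eq (hanti : StrictlyAntipodal Q u v)
    (h : suppCone Q u - ({u} : Set (Pt D)) = ({w} : Set (Pt D)) - suppCone Q w)
    (hw : w ∈ Q) : w = v := by
  obtain ⟨f, -, hmax, hmin⟩ := hanti
  have hu : u ∈ {x | x ∈ Q ∧ ∀ y ∈ Q, f y ≤ f x} := hmax ▸ rfl
  have hwmin : w ∈ {x | x ∈ Q ∧ ∀ y ∈ Q, f x ≤ f y} :=
    ⟨hw, fun y hy => map_le_of_suppCone_sub_eq h hu.2 hy⟩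
  rwa [hmin] at hwmin

lemma minFace_eq_of_suppCone_sub_eq {F E : Set (Pt D)} {g : Pt D →ₗ[ℝ] ℝ}
    (h : suppCone Q u - ({u} : Set (Pt D)) = ({w} : Set (Pt D)) - suppCone Q w)
    (hF : F = {x | x ∈ Q ∧ ∀ y ∈ Q, f y ≤ f x}) (hwF : w ∈ F)
    (hE : E = {x | x ∈ Q ∧ ∀ y ∈ Q, g y ≤ g x}) (huE : u ∈ E)
    (hpar : (affineSpan ℝ E).direction = (affineSpan ℝ F).direction) :
    {x | x ∈ Q ∧ ∀ y ∈ Q, f x ≤ f y} = E := by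
  have hwmax : ∀ y ∈ Q, f y ≤ f w := by rw [hF] at hwF; exact hwF.2
  have huQ : u ∈ Q := by rw [hE] at huE; exact huE.1
  have hfu : ∀ y ∈ Q, f u ≤ f y := fun y hy =>
    map_le_of_suppCone_sub_eq (suppCone_sub_eq_symm h) hwmax hy
  ext x
  constructor
  · rintro ⟨hx, hxmin⟩
    obtain ⟨c, hc, hxc⟩ := exists_mem_suppCone_sub_eq h hx
    have hfc : f w ≤ f c := by
      have := congrArg f hxc
      simp only [map_sub] at this
      linarith [hxmin u huQ, hfu x hx]
    have hcw := sub_mem_direction_of_mem_suppCone hF hwF hc hfc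
    refine mem_of_sub_mem_direction hE huE hx ?_
    rw [hpar, hxc, ← neg_sub]
    exact Submodule.neg_mem _ hcw
  · intro hxE
    have hx : x ∈ Q := by rw [hE] at hxE; exact hxE.1
    have hxu : x - u ∈ (affineSpan ℝ F).direction := hpar ▸ AffineSubspace.vsub_mem_direction
      (subset_affineSpan ℝ E hxE) (subset_affineSpan ℝ E huE)
    have hfx : f x = f u := sub_eq_zero.mp (by simpa using direction_affineSpan_le_ker hF hxu)
    exact ⟨hx, fun y hy => hfx ▸ hfu y hy⟩

end OppositeCones

theorem stmt8_general {D : ℕ} (Q : Set (Pt D))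
    (hlps : LocallyPointSymmetric Q)
    (v₁ v₂ : Pt D) (hv₁ : v₁ ∈ Set.extremePoints ℝ Q)
    (hanti : StrictlyAntipodal Q v₁ v₂)
    (E₁ E₂ : Set (Pt D)) (hE₁ : IsEdge Q E₁) (hE₂ : IsEdge Q E₂)
    (hpar : (affineSpan ℝ E₁).direction = (affineSpan ℝ E₂).direction)
    (hv₁E : v₁ ∈ E₁) (hv₂E : v₂ ∈ E₂) :
    ∃ f : Pt D →ₗ[ℝ] ℝ, f ≠ 0 ∧
      {x | x ∈ Q ∧ ∀ y ∈ Q, f x ≤ f y} = E₁ ∧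
      {x | x ∈ Q ∧ ∀ y ∈ Q, f y ≤ f x} = E₂ := by
  obtain ⟨⟨f₁, -, hE₁f⟩, -⟩ := hE₁
  obtain ⟨⟨f₂, hf₂, hE₂f⟩, -⟩ := hE₂
  obtain ⟨σ, hσ⟩ := hlps
  obtain ⟨hσv₁, -, -, -, hcones⟩ := hσ v₁ hv₁
  obtain rfl : σ v₁ = v₂ := eq_of_strictlyAntipodal_of_suppCone_sub_eq hanti hcones hσv₁.1
  exact ⟨f₂, hf₂, minFace_eq_of_suppCone_sub_eq hcones hE₂f hv₂E hE₁f hv₁E hpar, hE₂f.symm⟩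

/-- Let `Q` be a locally point symmetric convex polytope, `v₁, v₂` a
pair of strictly antipodal vertices, and `E₁, E₂` parallel edges with `v₁ ∈ E₁` and
`v₂ ∈ E₂`. Then there exist parallel supporting hyperplanes `H₁, H₂` of `Q` (with common
normal functional `f`) such that `H₁ ∩ Q = E₁` and `H₂ ∩ Q = E₂`. -/
theorem stmt8 {D : ℕ} (Q : Set (Pt D)) (hQ : IsPolytope Q)
    (hlps : LocallyPointSymmetric Q)
    (v₁ v₂ : Pt D) (hv₁ : v₁ ∈ Set.extremePoints ℝ Q) (hv₂ : v₂ ∈ Set.extremePoints ℝ Q)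
    (hanti : StrictlyAntipodal Q v₁ v₂)
    (E₁ E₂ : Set (Pt D)) (hE₁ : IsEdge Q E₁) (hE₂ : IsEdge Q E₂)
    (hpar : (affineSpan ℝ E₁).direction = (affineSpan ℝ E₂).direction)
    (hv₁E : v₁ ∈ E₁) (hv₂E : v₂ ∈ E₂) :
    ∃ f : Pt D →ₗ[ℝ] ℝ, f ≠ 0 ∧
      {x | x ∈ Q ∧ ∀ y ∈ Q, f x ≤ f y} = E₁ ∧
      {x | x ∈ Q ∧ ∀ y ∈ Q, f y ≤ f x} = E₂ :=
  stmt8_general Q hlps v₁ v₂ hv₁ hanti E₁ E₂ hE₁ hE₂ hpar hv₁E hv₂E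
end
end

section
/- Let Q ⊆ ℝ^D be a compact convex set, and suppose H₁ and H₂ are parallel supporting hyperplanes of Q such that H₁ ∩ Q = {v} for a single point v and H₂ ∩ Q = F for some set F ⊆ Q. Then for every f ∈ F, the difference f − v is uniquely formed in Q − Q: the only pair (p,q) ∈ Q × Q with p − q = f − v is (f, v). -/
open scoped Pointwise

noncomputable section

theorem LinearMap.map_eq_lower_of_sub_eq_width {E : Type*} [AddCommGroup E] [Module ℝ E]
    {Q : Set E} (g : E →ₗ[ℝ] ℝ) {c₁ c₂ : ℝ}
    (hlow : ∀ x ∈ Q, c₁ ≤ g x) (hhigh : ∀ x ∈ Q, g x ≤ c₂)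
    {f v p q : E} (hf : g f = c₂) (hv : g v = c₁) (hp : p ∈ Q) (hq : q ∈ Q)
    (hpq : p - q = f - v) : g q = c₁ := by
  have hwidth : g p - g q = c₂ - c₁ := by rw [← map_sub, hpq, map_sub, hf, hv]
  linarith [hhigh p hp, hlow q hq]

theorem stmt11_general {D : ℕ} (Q : Set (Pt D)) (g : Pt D →ₗ[ℝ] ℝ) (c₁ c₂ : ℝ)
    (hlow : ∀ x ∈ Q, c₁ ≤ g x) (hhigh : ∀ x ∈ Q, g x ≤ c₂)
    (v : Pt D) (hv : {x | x ∈ Q ∧ g x = c₁} = {v})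
    (F : Set (Pt D)) (hF : {x | x ∈ Q ∧ g x = c₂} = F) :
    ∀ f ∈ F, ∀ p ∈ Q, ∀ q ∈ Q, p - q = f - v → p = f ∧ q = v := by
  subst hF
  rintro f ⟨-, hgf⟩ p hp q hq hpq
  have hgv : g v = c₁ := ((Set.ext_iff.mp hv v).mpr rfl).2
  have hgq := g.map_eq_lower_of_sub_eq_width hlow hhigh hgf hgv hp hq hpq
  have hqv : q = v := (Set.ext_iff.mp hv q).mp ⟨hq, hgq⟩
  subst hqv
  exact ⟨sub_left_inj.mp hpq, rfl⟩

/-- Let `Q ⊆ ℝ^D` be compact and convex, and let `H₁ = {g = c₁}` and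
`H₂ = {g = c₂}` be parallel supporting hyperplanes of `Q` (so `Q` lies in the slab
`c₁ ≤ g ≤ c₂`) with `H₁ ∩ Q = {v}` and `H₂ ∩ Q = F`. Then for every `f ∈ F` the
difference `f - v` is uniquely formed in `Q - Q`. -/
theorem stmt11 {D : ℕ} (Q : Set (Pt D)) (hQc : IsCompact Q) (hQconv : Convex ℝ Q)
    (g : Pt D →ₗ[ℝ] ℝ) (hg : g ≠ 0) (c₁ c₂ : ℝ)
    (hlow : ∀ x ∈ Q, c₁ ≤ g x) (hhigh : ∀ x ∈ Q, g x ≤ c₂)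
    (v : Pt D) (hv : {x | x ∈ Q ∧ g x = c₁} = {v})
    (F : Set (Pt D)) (hF : {x | x ∈ Q ∧ g x = c₂} = F) :
    ∀ f ∈ F, ∀ p ∈ Q, ∀ q ∈ Q, p - q = f - v → p = f ∧ q = v :=
  stmt11_general Q g c₁ c₂ hlow hhigh v hv F hF
end
end

section
/- Let P be a convex polytope in ℝ^D with vertices in ℤ^D, let n ∈ ℕ, let r > 0, and fix a fringe set F_r ⊆ B_r(nP) such that exactly l points of B_r(nP) are absent from F_r. Let k ∈ M_r(nP+nP). Then among all subsets S ⊆ L(nP) satisfying S ∩ B_r(nP) = F_r, the proportion of those with k ∉ S+S is at most (3/4)^{|L(nP ∩ (k − nP))|/2 − l}. -/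
open scoped Pointwise

noncomputable section

/-!
An admissible `S` is `F` together with an arbitrary subset of the free points
`L(nP) \ B_r(nP)`, so there are `2 ^ #free` of them. The lattice points of
`nP ∩ (k - nP)` are closed under `x ↦ k - x` and so fall into pairs `{x, k - x}`; discarding the
pairs that meet one of the `l` missing fringe points leaves at least
`|L(nP ∩ (k - nP))| / 2 - l` disjoint pairs inside `F ∪ free`. If `k ∉ S + S` then `S` contains
none of them, and since the pairs are disjoint and have at most two points, each of them
independently rules out at least a quarter of the choices of the free part.
-/

section

open Finset

section Avoid

variable {α ι : Type*} [DecidableEq α]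

theorem card_filter_not_subset_insert_le [DecidableEq ι] (Ω : Finset α) (C : ι → Finset α)
    (i : ι) (𝒞 : Finset ι) :
    #{S ∈ Ω.powerset | ∀ j ∈ insert i 𝒞, ¬ C j ⊆ S} ≤
      (2 ^ #(C i) - 1) * #{S ∈ (Ω \ C i).powerset | ∀ j ∈ 𝒞, ¬ C j ⊆ S} := by
  rw [← card_powerset (C i), ← card_erase_of_mem (mem_powerset_self (C i)), ← card_product]
  refine card_le_card_of_injOn (fun S => (S ∩ C i, S \ C i)) ?_ ?_
  · intro S hS
    simp only [mem_coe, mem_filter, mem_powerset, forall_mem_insert] at hS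
    obtain ⟨hSΩ, hCi, hC⟩ := hS
    simp only [mem_coe, mem_product, mem_erase, mem_filter, mem_powerset]
    refine ⟨⟨fun h => hCi (h ▸ inter_subset_left), inter_subset_right⟩,
      sdiff_subset_sdiff hSΩ le_rfl, fun j hj hCj => hC j hj (hCj.trans sdiff_subset)⟩
  · intro S _ S' _ h
    simp only [Prod.mk.injEq] at h
    rw [← sdiff_union_inter S (C i), ← sdiff_union_inter S' (C i), h.1, h.2]

theorem card_filter_not_subset_mul_le (C : ι → Finset α) (𝒞 : Finset ι)
    (hcard : ∀ i ∈ 𝒞, #(C i) ≤ 2) (hdisj : (𝒞 : Set ι).PairwiseDisjoint C) :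
    ∀ Ω : Finset α, (∀ i ∈ 𝒞, C i ⊆ Ω) →
      #{S ∈ Ω.powerset | ∀ i ∈ 𝒞, ¬ C i ⊆ S} * 4 ^ #𝒞 ≤ 3 ^ #𝒞 * 2 ^ #Ω := by
  classical
  induction 𝒞 using Finset.induction_on with
  | empty =>
    intro Ω _
    simp only [card_empty, pow_zero, mul_one, one_mul]
    exact (card_filter_le _ _).trans_eq (card_powerset Ω)
  | @insert i 𝒞 hi ih =>
    intro Ω hCΩ
    rw [forall_mem_insert] at hcard hCΩ
    rw [coe_insert, Set.pairwiseDisjoint_insert_of_notMem (mem_coe.not.2 hi)] at hdisj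
    have hrest : #{S ∈ (Ω \ C i).powerset | ∀ j ∈ 𝒞, ¬ C j ⊆ S} * 4 ^ #𝒞 ≤
        3 ^ #𝒞 * 2 ^ #(Ω \ C i) :=
      ih hcard.2 hdisj.1 _ fun j hj =>
        subset_sdiff.2 ⟨hCΩ.2 j hj, (hdisj.2 j hj).symm⟩
    have hsplit : 2 ^ #(C i) * 2 ^ #(Ω \ C i) = 2 ^ #Ω := by
      rw [← pow_add, card_sdiff_of_subset hCΩ.1, Nat.add_sub_cancel' (card_le_card hCΩ.1)]
    have hfactor : (2 ^ #(C i) - 1) * 4 ≤ 3 * 2 ^ #(C i) := by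
      have := hcard.1
      interval_cases #(C i) <;> norm_num
    rw [card_insert_of_notMem hi]
    calc #{S ∈ Ω.powerset | ∀ j ∈ insert i 𝒞, ¬ C j ⊆ S} * 4 ^ (#𝒞 + 1)
        ≤ (2 ^ #(C i) - 1) * #{S ∈ (Ω \ C i).powerset | ∀ j ∈ 𝒞, ¬ C j ⊆ S} * 4 ^ (#𝒞 + 1) :=
          Nat.mul_le_mul_right _ (card_filter_not_subset_insert_le Ω C i 𝒞)
      _ = ((2 ^ #(C i) - 1) * 4) *
            (#{S ∈ (Ω \ C i).powerset | ∀ j ∈ 𝒞, ¬ C j ⊆ S} * 4 ^ #𝒞) := by ring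
      _ ≤ (3 * 2 ^ #(C i)) * (3 ^ #𝒞 * 2 ^ #(Ω \ C i)) := Nat.mul_le_mul hfactor hrest
      _ = 3 ^ (#𝒞 + 1) * 2 ^ #Ω := by rw [← hsplit]; ring

end Avoid

section ReflPair

variable {α : Type*} [AddCommGroup α] [DecidableEq α]

def reflPair (k x : α) : Finset α := {x, k - x}

theorem mem_reflPair_self (k x : α) : x ∈ reflPair k x := mem_insert_self _ _

theorem sub_mem_reflPair (k x : α) : k - x ∈ reflPair k x :=
  mem_insert_of_mem (mem_singleton_self _)

theorem card_reflPair_le (k x : α) : #(reflPair k x) ≤ 2 := card_le_two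

theorem reflPair_eq_of_mem {k x z : α} (hz : z ∈ reflPair k x) :
    reflPair k z = reflPair k x := by
  rcases mem_insert.1 hz with rfl | hz
  · rfl
  · rw [mem_singleton.1 hz, reflPair, reflPair, sub_sub_cancel, pair_comm]

theorem pairwiseDisjoint_image_reflPair (k : α) (G : Finset α) :
    (G.image (reflPair k) : Set (Finset α)).PairwiseDisjoint id := by
  rintro _ hp _ hq hpq
  obtain ⟨x, -, rfl⟩ := mem_image.1 hp
  obtain ⟨y, -, rfl⟩ := mem_image.1 hq
  refine disjoint_left.2 fun z hzx hzy => hpq ?_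
  rw [← reflPair_eq_of_mem hzx, reflPair_eq_of_mem hzy]

theorem card_le_two_mul_card_image_reflPair (k : α) (G : Finset α) :
    #G ≤ 2 * #(G.image (reflPair k)) := by
  refine card_le_mul_card_image G 2 fun p hp => ?_
  obtain ⟨x, -, rfl⟩ := mem_image.1 hp
  refine (card_le_card fun a ha => ?_).trans (card_reflPair_le k x)
  exact (mem_filter.1 ha).2 ▸ mem_reflPair_self k a

theorem card_filter_mem_or_sub_mem_le (k : α) (T X : Finset α) :
    #{x ∈ T | x ∈ X ∨ k - x ∈ X} ≤ 2 * #X := by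
  calc #{x ∈ T | x ∈ X ∨ k - x ∈ X} ≤ #(X ∪ X.image (k - ·)) := by
        refine card_le_card fun x hx => ?_
        rcases (mem_filter.1 hx).2 with hx | hx
        · exact mem_union_left _ hx
        · exact mem_union_right _ (mem_image.2 ⟨k - x, hx, sub_sub_cancel k x⟩)
    _ ≤ #X + #X := (card_union_le _ _).trans (Nat.add_le_add_left card_image_le _)
    _ = 2 * #X := (two_mul _).symm

theorem card_le_two_mul_card_image_reflPair_filter_add (k : α) (T X : Finset α) :
    #T ≤ 2 * #((T.filter fun x => ¬ (x ∈ X ∨ k - x ∈ X)).image (reflPair k)) + 2 * #X := by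
  have hsplit := card_filter_add_card_filter_not (s := T) fun x => x ∈ X ∨ k - x ∈ X
  have hbad := card_filter_mem_or_sub_mem_le k T X
  have hgood := card_le_two_mul_card_image_reflPair k (T.filter fun x => ¬ (x ∈ X ∨ k - x ∈ X))
  omega

end ReflPair

open Classical in
theorem ncard_setOf_subset_inter_eq {α : Type*} {N B F : Set α} (U : Finset α)
    (hU : (U : Set α) = N \ B) (hBN : B ⊆ N) (hFB : F ⊆ B) (p : Set α → Prop) :
    {S | S ⊆ N ∧ S ∩ B = F ∧ p S}.ncard =
      #(U.powerset.filter fun S₀ : Finset α => p (F ∪ ↑S₀)) := by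
  have hsub : ∀ S₀ ∈ U.powerset, (S₀ : Set α) ⊆ N \ B := fun S₀ hS₀ =>
    hU ▸ coe_subset.2 (mem_powerset.1 hS₀)
  have himage : {S | S ⊆ N ∧ S ∩ B = F ∧ p S} =
      (fun S₀ : Finset α => F ∪ ↑S₀) ''
        ↑(U.powerset.filter fun S₀ : Finset α => p (F ∪ ↑S₀)) := by
    ext S
    constructor
    · rintro ⟨hSN, hSB, hpS⟩
      have hfilter : (↑(U.filter (· ∈ S)) : Set α) = S \ B := by
        ext x
        have hx := Set.ext_iff.1 hU x
        have hxN := @hSN x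
        simp only [coe_filter, mem_coe, Set.mem_sdiff, Set.mem_ofPred_eq] at hx ⊢
        tauto
      have hS : F ∪ ↑(U.filter (· ∈ S)) = S := by
        rw [hfilter, ← hSB, Set.inter_union_sdiff]
      exact ⟨U.filter (· ∈ S), mem_filter.2 ⟨mem_powerset.2 (filter_subset _ _), by rwa [hS]⟩, hS⟩
    · rintro ⟨S₀, hS₀, rfl⟩
      obtain ⟨hS₀U, hpS₀⟩ := mem_filter.1 hS₀
      have h := hsub S₀ hS₀U
      refine ⟨Set.union_subset (hFB.trans hBN) (h.trans Set.sdiff_subset), ?_, hpS₀⟩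
      rw [Set.union_inter_distrib_right, Set.inter_eq_left.2 hFB,
        Set.disjoint_iff_inter_eq_empty.1 (Set.subset_sdiff.1 h).2, Set.union_empty]
  rw [himage, Set.InjOn.ncard_image, Set.ncard_coe_finset]
  have hdiff : ∀ S₀ ∈ U.powerset, (F ∪ S₀) \ B = S₀ := fun S₀ hS₀ => by
    rw [Set.union_sdiff_distrib, Set.sdiff_eq_empty.2 hFB, Set.empty_union,
      sdiff_eq_left.2 (Set.subset_sdiff.1 (hsub S₀ hS₀)).2]
  intro S₀ hS₀ S₁ hS₁ h
  refine coe_injective ?_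
  rw [← hdiff S₀ (mem_filter.1 hS₀).1, ← hdiff S₁ (mem_filter.1 hS₁).1]
  exact congrArg (· \ B) h

section ReflPairCount

variable {α : Type*} [AddCommGroup α] [DecidableEq α]

open Classical in
theorem card_filter_notMem_add_mul_le (k : α) (F : Set α) (U G : Finset α)
    (hG : ∀ x ∈ G, ↑(reflPair k x) ⊆ F ∪ ↑U) :
    #(U.powerset.filter fun S₀ : Finset α => k ∉ (F ∪ ↑S₀) + (F ∪ ↑S₀)) *
        4 ^ #(G.image (reflPair k)) ≤
      3 ^ #(G.image (reflPair k)) * 2 ^ #U := by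
  refine le_trans (Nat.mul_le_mul_right _ (card_le_card fun S₀ hS₀ => ?_))
    (card_filter_not_subset_mul_le (· ∩ U) (G.image (reflPair k))
      (fun p hp => (card_le_card inter_subset_left).trans <| by
        obtain ⟨x, -, rfl⟩ := mem_image.1 hp
        exact card_reflPair_le k x)
      ((pairwiseDisjoint_image_reflPair k G).mono fun _ => inter_subset_left) U
      fun _ _ => inter_subset_right)
  obtain ⟨hS₀U, hk⟩ := mem_filter.1 hS₀
  refine mem_filter.2 ⟨hS₀U, fun p hp hpS₀ => hk ?_⟩
  obtain ⟨x, hx, rfl⟩ := mem_image.1 hp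
  have hpair : ↑(reflPair k x) ⊆ F ∪ ↑S₀ := fun y hy =>
    (hG x hx hy).imp_right fun hyU => hpS₀ (mem_inter.2 ⟨hy, hyU⟩)
  simpa using Set.add_mem_add (hpair (mem_reflPair_self k x)) (hpair (sub_mem_reflPair k x))

end ReflPairCount

theorem ncard_setOf_notMem_add_div_le {α : Type*} [AddCommGroup α] (k : α)
    {N B F T : Set α}
    (hN : N.Finite) (hBN : B ⊆ N) (hFB : F ⊆ B) (hTN : T ⊆ N) (hT : ∀ x ∈ T, k - x ∈ T) :
    ({S | S ⊆ N ∧ S ∩ B = F ∧ k ∉ S + S}.ncard : ℝ) / {S | S ⊆ N ∧ S ∩ B = F}.ncard ≤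
      (3 / 4 : ℝ) ^ ((T.ncard : ℝ) / 2 - (B \ F).ncard) := by
  classical
  set U := (hN.sdiff (t := B)).toFinset
  have hU : (U : Set α) = N \ B := Set.Finite.coe_toFinset _
  have hTfin : T.Finite := hN.subset hTN
  have hXfin : (B \ F).Finite := hN.subset (Set.sdiff_subset.trans hBN)
  set X := hXfin.toFinset
  set G := hTfin.toFinset.filter fun x => ¬ (x ∈ X ∨ k - x ∈ X)
  set m := #(G.image (reflPair k))
  have hfree : ∀ y ∈ T, y ∉ B \ F → y ∈ F ∪ (U : Set α) := fun y hyT hyX => by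
    rw [hU]
    by_cases hyB : y ∈ B
    · exact Or.inl (not_not.1 fun hyF => hyX ⟨hyB, hyF⟩)
    · exact Or.inr ⟨hTN hyT, hyB⟩
  have hG : ∀ x ∈ G, ↑(reflPair k x) ⊆ F ∪ ↑U := by
    intro x hx y hy
    simp only [G, X, mem_filter, Set.Finite.mem_toFinset, not_or] at hx
    obtain ⟨hxT, hxX, hkxX⟩ := hx
    rcases mem_insert.1 hy with rfl | hy
    · exact hfree y hxT hxX
    · exact mem_singleton.1 hy ▸ hfree _ (hT x hxT) hkxX
  have hnum := ncard_setOf_subset_inter_eq U hU hBN hFB fun S => k ∉ S + S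
  have hden : {S | S ⊆ N ∧ S ∩ B = F}.ncard = 2 ^ #U := by
    simpa using ncard_setOf_subset_inter_eq U hU hBN hFB fun _ => True
  have hm : (T.ncard : ℝ) / 2 - (B \ F).ncard ≤ m := by
    have h : (#hTfin.toFinset : ℝ) ≤ 2 * m + 2 * #X := by
      exact_mod_cast card_le_two_mul_card_image_reflPair_filter_add k hTfin.toFinset X
    rw [Set.ncard_eq_toFinset_card T hTfin, Set.ncard_eq_toFinset_card _ hXfin]
    linarith
  have hcount : _ * 4 ^ m ≤ 3 ^ m * 2 ^ #U := card_filter_notMem_add_mul_le k F U G hG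
  rw [hnum, hden]
  calc _ ≤ (3 / 4 : ℝ) ^ m := by
        rw [div_pow, div_le_div_iff₀ (by positivity) (by positivity)]
        norm_cast
        -- the two filters differ only in their classical decidability instances
        convert hcount
    _ = (3 / 4 : ℝ) ^ (m : ℝ) := (Real.rpow_natCast _ m).symm
    _ ≤ _ := Real.rpow_le_rpow_of_exponent_ge (by norm_num) (by norm_num) hm

end

theorem latticePts_finite {D : ℕ} {S : Set (Pt D)} (hS : Bornology.IsBounded S) :
    (latticePts S).Finite := by
  obtain ⟨M, hM⟩ := isBounded_iff_forall_norm_le.1 hS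
  have hbox : (Set.univ.pi fun _ : Fin D => Set.Icc (-⌈M⌉) ⌈M⌉).Finite :=
    Set.Finite.pi fun _ => Set.finite_Icc _ _
  refine (hbox.image fun z => WithLp.toLp 2 fun i => (z i : ℝ)).subset ?_
  rintro x ⟨hxS, hxZ⟩
  choose z hz using hxZ
  refine ⟨z, fun i _ => abs_le.1 ?_, PiLp.ext fun i => (hz i).symm⟩
  have h : |(z i : ℝ)| ≤ ⌈M⌉ := by
    rw [← hz i, ← Real.norm_eq_abs]
    exact (PiLp.norm_apply_le x i).trans ((hM x hxS).trans (Int.le_ceil M))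
  exact_mod_cast h

theorem IsPolytope.isBounded {D : ℕ} {P : Set (Pt D)} (hP : IsPolytope P) :
    Bornology.IsBounded P := by
  obtain ⟨V, hV, rfl⟩ := hP
  exact isBounded_convexHull.2 hV.isBounded

theorem sub_mem_latticePts_inter_singleton_sub {D : ℕ} {Q : Set (Pt D)} {k x : Pt D}
    (hk : ∀ i, ∃ z : ℤ, k i = z) (hx : x ∈ latticePts (Q ∩ ({k} - Q))) :
    k - x ∈ latticePts (Q ∩ ({k} - Q)) := by
  obtain ⟨⟨hxQ, a, rfl, y, hyQ, rfl⟩, hxZ⟩ := hx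
  refine ⟨⟨by rwa [sub_sub_cancel], Set.sub_mem_sub rfl hxQ⟩, fun i => ?_⟩
  obtain ⟨m, hm⟩ := hk i
  obtain ⟨n, hn⟩ := hxZ i
  exact ⟨m - n, by rw [PiLp.sub_apply, hm, hn, Int.cast_sub]⟩

theorem stmt12_general {D : ℕ} (P : Set (Pt D)) (hP : IsLatticePolytope P)
    (n : ℕ) (r : ℝ) (F : Set (Pt D))
    (hF : F ⊆ ballFringe ((n : ℝ) • P) r) (l : ℕ)
    (hl : (ballFringe ((n : ℝ) • P) r \ F).ncard = l)
    (k : Pt D) (hk : k ∈ middlePts ((n : ℝ) • P + (n : ℝ) • P) r) :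
    (({S : Set (Pt D) | S ⊆ latticePts ((n : ℝ) • P) ∧
        S ∩ ballFringe ((n : ℝ) • P) r = F ∧ k ∉ S + S}).ncard : ℝ) /
      (({S : Set (Pt D) | S ⊆ latticePts ((n : ℝ) • P) ∧
        S ∩ ballFringe ((n : ℝ) • P) r = F}).ncard : ℝ) ≤
      ((3 : ℝ) / 4) ^
        (((latticePts ((n : ℝ) • P ∩ (({k} : Set (Pt D)) - (n : ℝ) • P))).ncard : ℝ) / 2
          - (l : ℝ)) := by
  have hbdd : Bornology.IsBounded ((n : ℝ) • P) := hP.1.isBounded.smul₀ _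
  rw [← hl]
  exact ncard_setOf_notMem_add_div_le k (latticePts_finite hbdd) (fun _ hq => hq.1) hF
    (fun _ hx => ⟨hx.1.1, hx.2⟩) fun _ hx => sub_mem_latticePts_inter_singleton_sub hk.1.2 hx

/-- Fix a fringe set `F ⊆ B_r(nP)` missing exactly `l` points of
`B_r(nP)`, and let `k ∈ M_r(nP + nP)`. Among subsets `S ⊆ L(nP)` with
`S ∩ B_r(nP) = F`, the proportion of those with `k ∉ S + S` is at most
`(3/4)^{|L(nP ∩ (k - nP))|/2 - l}`. -/
theorem stmt12 {D : ℕ} (P : Set (Pt D)) (hP : IsLatticePolytope P)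
    (n : ℕ) (r : ℝ) (hr : 0 < r) (F : Set (Pt D))
    (hF : F ⊆ ballFringe ((n : ℝ) • P) r) (l : ℕ)
    (hl : (ballFringe ((n : ℝ) • P) r \ F).ncard = l)
    (k : Pt D) (hk : k ∈ middlePts ((n : ℝ) • P + (n : ℝ) • P) r) :
    (({S : Set (Pt D) | S ⊆ latticePts ((n : ℝ) • P) ∧
        S ∩ ballFringe ((n : ℝ) • P) r = F ∧ k ∉ S + S}).ncard : ℝ) /
      (({S : Set (Pt D) | S ⊆ latticePts ((n : ℝ) • P) ∧
        S ∩ ballFringe ((n : ℝ) • P) r = F}).ncard : ℝ) ≤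
      ((3 : ℝ) / 4) ^
        (((latticePts ((n : ℝ) • P ∩ (({k} : Set (Pt D)) - (n : ℝ) • P))).ncard : ℝ) / 2
          - (l : ℝ)) :=
  stmt12_general P hP n r F hF l hl k hk
end
end

section
/- Let Q be a locally point symmetric convex polytope in ℝ^D, and let k ∈ Q − Q. The following statements are equivalent: (i) Q ∩ (Q − k) consists of a single point, i.e., k is a uniquely formed difference in Q − Q; (ii) k is a vertex (extreme point) of the polytope Q − Q; (iii) k = u − v for a pair of strictly antipodal vertices u and v of Q. -/
open scoped Pointwise

noncomputable section

/-!
(ii) ⇒ (i) and (iii) ⇒ (ii) hold for any set: a second representation of `k` would make `k` the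
midpoint of two other points of `Q - Q`, and if `u` and `v` are the unique maximizer and minimizer
of a functional on `Q`, then `u - v` is its unique maximizer on `Q - Q`.

For (i) ⇒ (iii) let `Q ∩ (Q - k) = {p}`. Local point symmetry makes the minimizing and the
maximizing face of every functional on `Q` parallel. Starting from the zero functional, refine a
functional `h` whose minimizing face `F` contains `p` and whose maximizing face `G` contains
`p + k`: the parallel convex sets `F` and `G - k` meet only in `p`, so some functional `f`
separates them without being constant on `F`, and for small `ε > 0` the faces of `h - ε f` are the
faces of `f` inside `F` and `G`. They still contain `p` and `p + k` but have smaller dimension, so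
eventually they are the points `p` and `p + k`, which are then strictly antipodal.
-/

open Set Filter Topology

section Minimizers

variable {E : Type*} [AddCommGroup E] [Module ℝ E]

def minimizers (A : Set E) (f : E →ₗ[ℝ] ℝ) : Set E :=
  {x | x ∈ A ∧ ∀ y ∈ A, f x ≤ f y}

def maximizers (A : Set E) (f : E →ₗ[ℝ] ℝ) : Set E :=
  {x | x ∈ A ∧ ∀ y ∈ A, f y ≤ f x}

@[simp]
lemma minimizers_neg (A : Set E) (f : E →ₗ[ℝ] ℝ) : minimizers A (-f) = maximizers A f := by
  ext x
  simp [minimizers, maximizers]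

@[simp]
lemma maximizers_neg (A : Set E) (f : E →ₗ[ℝ] ℝ) : maximizers A (-f) = minimizers A f := by
  rw [← minimizers_neg, neg_neg]

@[simp]
lemma minimizers_zero (A : Set E) : minimizers A 0 = A := by
  ext x
  simp [minimizers]

@[simp]
lemma maximizers_zero (A : Set E) : maximizers A 0 = A := by
  ext x
  simp [maximizers]

lemma minimizers_subset (A : Set E) (f : E →ₗ[ℝ] ℝ) : minimizers A f ⊆ A := fun _ hx => hx.1

lemma maximizers_subset (A : Set E) (f : E →ₗ[ℝ] ℝ) : maximizers A f ⊆ A := fun _ hx => hx.1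

lemma minimizers_eq_of_mem {A : Set E} {f : E →ₗ[ℝ] ℝ} {w : E} (hw : w ∈ minimizers A f) :
    minimizers A f = {x | x ∈ A ∧ f x = f w} := by
  ext x
  exact ⟨fun hx => ⟨hx.1, le_antisymm (hx.2 w hw.1) (hw.2 x hx.1)⟩,
    fun hx => ⟨hx.1, fun y hy => hx.2 ▸ hw.2 y hy⟩⟩

lemma maximizers_eq_of_mem {A : Set E} {f : E →ₗ[ℝ] ℝ} {w : E} (hw : w ∈ maximizers A f) :
    maximizers A f = {x | x ∈ A ∧ f x = f w} := by
  rw [← minimizers_neg] at hw ⊢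
  simpa using minimizers_eq_of_mem hw

lemma Convex.minimizers {A : Set E} (hA : Convex ℝ A) (f : E →ₗ[ℝ] ℝ) :
    Convex ℝ (minimizers A f) := by
  have : _root_.minimizers A f = A ∩ ⋂ y ∈ A, {x | f x ≤ f y} := by
    ext x
    simp [_root_.minimizers]
  rw [this]
  exact hA.inter (convex_iInter₂ fun y _ => convex_halfSpace_le f.isLinear (f y))

lemma Convex.maximizers {A : Set E} (hA : Convex ℝ A) (f : E →ₗ[ℝ] ℝ) :
    Convex ℝ (maximizers A f) :=
  minimizers_neg A f ▸ hA.minimizers (-f)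

lemma isExtreme_maximizers (A : Set E) (f : E →ₗ[ℝ] ℝ) : IsExtreme ℝ A (maximizers A f) := by
  refine ⟨maximizers_subset A f, fun x hx y hy z hz hzxy => ⟨hx, fun w hw => ?_⟩⟩
  exact (hz.2 w hw).trans <| (f.convexOn convex_univ).le_left_of_right_le (mem_univ x)
    (mem_univ y) hzxy (hz.2 y hy)

lemma mem_extremePoints_of_maximizers_eq_singleton {A : Set E} {f : E →ₗ[ℝ] ℝ} {x : E}
    (h : maximizers A f = {x}) : x ∈ A.extremePoints ℝ :=
  isExtreme_singleton.1 (h ▸ isExtreme_maximizers A f)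

lemma mem_extremePoints_of_minimizers_eq_singleton {A : Set E} {f : E →ₗ[ℝ] ℝ} {x : E}
    (h : minimizers A f = {x}) : x ∈ A.extremePoints ℝ :=
  mem_extremePoints_of_maximizers_eq_singleton (f := -f) (by simpa [← minimizers_neg] using h)

lemma maximizers_sub (A B : Set E) (f : E →ₗ[ℝ] ℝ) :
    maximizers (A - B) f = maximizers A f - minimizers B f := by
  ext x
  constructor
  · rintro ⟨⟨a, ha, b, hb, rfl⟩, H⟩
    refine ⟨a, ⟨ha, fun a' ha' => ?_⟩, b, ⟨hb, fun b' hb' => ?_⟩, rfl⟩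
    · simpa using H (a' - b) (sub_mem_sub ha' hb)
    · have := H (a - b') (sub_mem_sub ha hb')
      simp only [map_sub] at this
      linarith
  · rintro ⟨a, ⟨ha, Ha⟩, b, ⟨hb, Hb⟩, rfl⟩
    refine ⟨sub_mem_sub ha hb, ?_⟩
    rintro _ ⟨a', ha', b', hb', rfl⟩
    simp only [map_sub]
    linarith [Ha a' ha', Hb b' hb']

lemma vectorSpan_le_ker {s : Set E} {f : E →ₗ[ℝ] ℝ} {c : ℝ} (hs : ∀ x ∈ s, f x = c) :
    vectorSpan ℝ s ≤ LinearMap.ker f := by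
  rw [vectorSpan_def, Submodule.span_le]
  rintro _ ⟨x, hx, y, hy, rfl⟩
  simp [hs x hx, hs y hy]

end Minimizers

section Lexicographic

lemma eventually_add_mul_le_iff_lex (a b c d : ℝ) :
    ∀ᶠ ε in 𝓝[>] (0 : ℝ), (a + ε * b ≤ c + ε * d ↔ a < c ∨ a = c ∧ b ≤ d) := by
  have hsmall : ∀ r > 0, ∀ᶠ ε in 𝓝[>] (0 : ℝ), |ε * (b - d)| < r := fun r hr =>
    (((continuous_id.mul continuous_const).abs.tendsto' 0 0 (by simp)).mono_left
      nhdsWithin_le_nhds).eventually (gt_mem_nhds hr)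
  rcases lt_trichotomy a c with hac | rfl | hca
  · filter_upwards [hsmall (c - a) (by linarith)] with ε hε
    simp only [hac, true_or, iff_true]
    nlinarith [(abs_lt.1 hε).2]
  · filter_upwards [self_mem_nhdsWithin] with ε (hε : 0 < ε)
    simp [hε]
  · filter_upwards [hsmall (a - c) (by linarith)] with ε hε
    simp only [not_lt.2 hca.le, hca.ne', false_and, or_self, iff_false, not_le]
    nlinarith [(abs_lt.1 hε).1]

variable {E : Type*} [AddCommGroup E] [Module ℝ E]

lemma mem_minimizers_minimizers_iff {T : Set E} {h f : E →ₗ[ℝ] ℝ} {x : E} :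
    x ∈ minimizers (minimizers T h) f ↔
      x ∈ T ∧ ∀ y ∈ T, h x < h y ∨ h x = h y ∧ f x ≤ f y := by
  constructor
  · rintro ⟨⟨hx, hxh⟩, hxf⟩
    refine ⟨hx, fun y hy => (hxh y hy).lt_or_eq.imp_right fun hxy => ⟨hxy, hxf y ?_⟩⟩
    exact ⟨hy, fun z hz => hxy ▸ hxh z hz⟩
  · rintro ⟨hx, H⟩
    have hxh : ∀ y ∈ T, h x ≤ h y := fun y hy => (H y hy).elim le_of_lt fun hxy => hxy.1.le
    exact ⟨⟨hx, hxh⟩, fun y hy => ((H y hy.1).resolve_left (hy.2 x hx).not_gt).2⟩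

lemma eventually_minimizers_add_smul {T : Set E} (hT : T.Finite) (h f : E →ₗ[ℝ] ℝ) :
    ∀ᶠ ε in 𝓝[>] (0 : ℝ), minimizers T (h + ε • f) = minimizers (minimizers T h) f := by
  have hpairs : ∀ᶠ ε in 𝓝[>] (0 : ℝ), ∀ x ∈ T, ∀ y ∈ T,
      ((h + ε • f) x ≤ (h + ε • f) y ↔ h x < h y ∨ h x = h y ∧ f x ≤ f y) := by
    rw [eventually_all_finite hT]
    intro x _
    rw [eventually_all_finite hT]
    intro y _
    simpa using eventually_add_mul_le_iff_lex (h x) (f x) (h y) (f y)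
  filter_upwards [hpairs] with ε hε
  ext x
  rw [mem_minimizers_minimizers_iff]
  exact ⟨fun ⟨hx, H⟩ => ⟨hx, fun y hy => (hε x hx y hy).1 (H y hy)⟩,
    fun ⟨hx, H⟩ => ⟨hx, fun y hy => (hε x hx y hy).2 (H y hy)⟩⟩

end Lexicographic

section ConvexHull

variable {E : Type*} [AddCommGroup E] [Module ℝ E]

lemma minimizers_convexHull {V : Set E} (hV : V.Finite) (f : E →ₗ[ℝ] ℝ) :
    minimizers (convexHull ℝ V) f = convexHull ℝ (minimizers V f) := by
  rcases V.eq_empty_or_nonempty with rfl | hVne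
  · simp [minimizers]
  obtain ⟨w, hwV, hw⟩ := V.exists_min_image f hV hVne
  have hlow : ∀ {c : ℝ}, (∀ v ∈ V, c ≤ f v) → ∀ y ∈ convexHull ℝ V, c ≤ f y :=
    fun hc y hy => convexHull_min hc (convex_halfSpace_ge f.isLinear _) hy
  apply subset_antisymm
  · rintro x ⟨hx, hxmin⟩
    have hxw : f x = f w := le_antisymm (hxmin w (subset_convexHull ℝ V hwV)) (hlow hw x hx)
    have hS : minimizers V f = {v | v ∈ V ∧ f v = f w} := minimizers_eq_of_mem ⟨hwV, hw⟩
    set R := {v | v ∈ V ∧ f w < f v}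
    have hVSR : V = minimizers V f ∪ R := by
      ext v
      rw [hS]
      exact ⟨fun hv => (hw v hv).eq_or_lt.imp (fun h => ⟨hv, h.symm⟩) (fun h => ⟨hv, h⟩),
        fun hv => hv.elim (·.1) (·.1)⟩
    rcases R.eq_empty_or_nonempty with hR | hR
    · rwa [hVSR, hR, union_empty] at hx
    have hSne : (minimizers V f).Nonempty := ⟨w, hwV, hw⟩
    rw [hVSR, convexHull_union hSne hR, mem_convexJoin] at hx
    obtain ⟨s, hs, r, hr, a, b, ha, hb, hab, rfl⟩ := hx
    have hfs : f s = f w := by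
      rw [hS] at hs
      exact convexHull_min (fun v hv => hv.2) (convex_hyperplane f.isLinear (f w)) hs
    have hfr : f w < f r := convexHull_min (fun v hv => hv.2) (convex_halfSpace_gt f.isLinear _) hr
    obtain rfl : a = 1 - b := by linarith
    have hb0 : b * (f r - f w) = 0 := by
      simp only [map_add, map_smul, smul_eq_mul, hfs] at hxw
      linarith
    obtain rfl := (mul_eq_zero.1 hb0).resolve_right (sub_ne_zero.2 hfr.ne')
    simpa using hs
  · refine convexHull_min (fun v hv => ⟨subset_convexHull ℝ V hv.1, hlow hv.2⟩) ?_
    exact (convex_convexHull ℝ V).minimizers f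

lemma eventually_minimizers_convexHull_add_smul {V : Set E} (hV : V.Finite) (h f : E →ₗ[ℝ] ℝ) :
    ∀ᶠ ε in 𝓝[>] (0 : ℝ), minimizers (convexHull ℝ V) (h + ε • f) =
      minimizers (minimizers (convexHull ℝ V) h) f := by
  filter_upwards [eventually_minimizers_add_smul hV h f] with ε hε
  rw [minimizers_convexHull hV, hε, minimizers_convexHull hV,
    minimizers_convexHull (hV.subset (minimizers_subset V h))]

lemma eventually_maximizers_convexHull_add_smul {V : Set E} (hV : V.Finite) (h f : E →ₗ[ℝ] ℝ) :
    ∀ᶠ ε in 𝓝[>] (0 : ℝ), maximizers (convexHull ℝ V) (h + ε • f) =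
      maximizers (maximizers (convexHull ℝ V) h) f := by
  filter_upwards [eventually_minimizers_convexHull_add_smul hV (-h) (-f)] with ε hε
  simpa only [smul_neg, ← neg_add, minimizers_neg] using hε

end ConvexHull

section ParallelFaces

variable {E : Type*} [AddCommGroup E] [Module ℝ E]

/-- `suppCone Q v = {v} + dirCone Q v`. -/
def dirCone (A : Set E) (x : E) : Set E :=
  ⋃ (l : ℝ) (_ : 0 ≤ l), l • (A - ({x} : Set E))

lemma mem_dirCone {A : Set E} {x z : E} :
    z ∈ dirCone A x ↔ ∃ l : ℝ, 0 ≤ l ∧ ∃ q ∈ A, l • (q - x) = z := by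
  simp [dirCone, mem_smul_set, sub_singleton]

lemma sub_mem_dirCone {A : Set E} {x q : E} (hq : q ∈ A) : q - x ∈ dirCone A x :=
  mem_dirCone.2 ⟨1, zero_le_one, q, hq, one_smul ℝ _⟩

lemma vectorSpan_levelSet_le {Q : Set E} {a b : E} (hb : b ∈ Q) (h : E →ₗ[ℝ] ℝ)
    (hab : -dirCone Q a ⊆ dirCone Q b) :
    vectorSpan ℝ {x | x ∈ Q ∧ h x = h a} ≤ vectorSpan ℝ {x | x ∈ Q ∧ h x = h b} := by
  have key : ∀ x ∈ Q, h x = h a → x - a ∈ vectorSpan ℝ {x | x ∈ Q ∧ h x = h b} := by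
    intro x hx hxa
    obtain ⟨l, hl, q, hq, hlq⟩ :=
      mem_dirCone.1 (hab (neg_mem_neg.2 (sub_mem_dirCone (x := a) hx)))
    rcases hl.eq_or_lt with rfl | hl
    · rw [zero_smul, eq_comm, neg_eq_zero] at hlq
      rw [hlq]
      exact zero_mem _
    have hqb : h q = h b := by
      have := congrArg h hlq
      simp only [map_smul, map_sub, map_neg, hxa, sub_self, neg_zero, smul_eq_mul] at this
      linarith [(mul_eq_zero.1 this).resolve_left hl.ne']
    have hxa' : x - a = l • (b - q) := by
      rw [← neg_sub q b, smul_neg, hlq, neg_neg]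
    rw [hxa']
    exact Submodule.smul_mem _ _ (vsub_mem_vectorSpan ℝ ⟨hb, rfl⟩ ⟨hq, hqb⟩)
  rw [vectorSpan_def, Submodule.span_le]
  rintro _ ⟨x, ⟨hx, hxa⟩, y, ⟨hy, hya⟩, rfl⟩
  simpa using Submodule.sub_mem _ (key x hx hxa) (key y hy hya)

lemma mem_maximizers_of_dirCone_subset_neg {Q : Set E} {h : E →ₗ[ℝ] ℝ} {w w' : E}
    (hw : w ∈ minimizers Q h) (hw' : w' ∈ Q) (hcone : dirCone Q w' ⊆ -dirCone Q w) :
    w' ∈ maximizers Q h := by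
  refine ⟨hw', fun y hy => ?_⟩
  obtain ⟨l, hl, q, hq, hlq⟩ := mem_dirCone.1 (hcone (sub_mem_dirCone (x := w') hy))
  have := congrArg h hlq
  simp only [map_smul, map_sub, map_neg, smul_eq_mul] at this
  nlinarith [hw.2 q hq]

lemma vectorSpan_maximizers_eq_of_dirCone_eq_neg {Q : Set E} {h : E →ₗ[ℝ] ℝ} {w w' : E}
    (hw : w ∈ minimizers Q h) (hw' : w' ∈ Q) (hcone : dirCone Q w' = -dirCone Q w) :
    vectorSpan ℝ (maximizers Q h) = vectorSpan ℝ (minimizers Q h) := by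
  rw [maximizers_eq_of_mem (mem_maximizers_of_dirCone_subset_neg hw hw' hcone.subset),
    minimizers_eq_of_mem hw]
  exact le_antisymm (vectorSpan_levelSet_le hw.1 h (by rw [hcone, neg_neg]))
    (vectorSpan_levelSet_le hw' h (by rw [hcone]))

end ParallelFaces

section Separation

variable {E : Type*} [NormedAddCommGroup E] [NormedSpace ℝ E] [FiniteDimensional ℝ E]

lemma Convex.interior_add_submodule_nonempty {A : Set E} (hA : Convex ℝ A) (hne : A.Nonempty)
    {C : Submodule ℝ E} (hC : vectorSpan ℝ A ⊔ C = ⊤) : (interior (A + (C : Set E))).Nonempty := by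
  obtain ⟨p, hp⟩ := hne
  have hAC : A ⊆ A + (C : Set E) := fun a ha => ⟨a, ha, 0, C.zero_mem, add_zero a⟩
  rw [(hA.add C.convex).interior_nonempty_iff_affineSpan_eq_top,
    AffineSubspace.affineSpan_eq_top_iff_vectorSpan_eq_top_of_nonempty ℝ _ _ ⟨p, hAC hp⟩,
    eq_top_iff, ← hC]
  refine sup_le (vectorSpan_mono ℝ hAC) fun c hc => ?_
  simpa using vsub_mem_vectorSpan ℝ (show p + c ∈ A + (C : Set E) from ⟨p, hp, c, hc, rfl⟩)
    (hAC hp)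

lemma exists_separating_of_inter_subset_singleton {A B : Set E} {p : E} (hA : Convex ℝ A)
    (hB : Convex ℝ B) (hpA : p ∈ A) (hpB : p ∈ B) (hAB : A ∩ B ⊆ {p})
    (hspan : vectorSpan ℝ B = vectorSpan ℝ A) (hne : vectorSpan ℝ A ≠ ⊥) :
    ∃ f : E →ₗ[ℝ] ℝ, (∀ a ∈ A, f a ≤ f p) ∧ (∀ b ∈ B, f p ≤ f b) ∧ ∃ a ∈ A, f a < f p := by
  -- Thickening `A` along a complement of its direction gives a set with interior,
  -- as Hahn-Banach requires, without changing its intersection with `B`.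
  obtain ⟨C, hC⟩ := (vectorSpan ℝ A).exists_isCompl
  set A' := A + (C : Set E)
  have hAA' : A ⊆ A' := fun a ha => ⟨a, ha, 0, C.zero_mem, add_zero a⟩
  have hA'C : ∀ x ∈ A', ∀ c ∈ C, x + c ∈ A' := by
    rintro _ ⟨a, ha, c', hc', rfl⟩ c hc
    exact ⟨a, ha, c' + c, C.add_mem hc' hc, (add_assoc a c' c).symm⟩
  have hint : (interior A').Nonempty := hA.interior_add_submodule_nonempty ⟨p, hpA⟩ hC.sup_eq_top
  have hBA' : B ∩ A' ⊆ {p} := by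
    rintro _ ⟨hb, a, ha, c, hc, rfl⟩
    have hcA : c ∈ vectorSpan ℝ A := by
      have hb' := vsub_mem_vectorSpan ℝ hb hpB
      rw [hspan] at hb'
      simpa using Submodule.sub_mem _ hb' (vsub_mem_vectorSpan ℝ ha hpA)
    obtain rfl : c = 0 := Submodule.disjoint_def.1 hC.disjoint c hcA hc
    simp only [add_zero] at hb ⊢
    exact hAB ⟨ha, hb⟩
  have hdisj : Disjoint (interior A') B := by
    refine disjoint_left.2 fun x hxint hxB => ?_
    obtain rfl : x = p := hBA' ⟨hxB, interior_subset hxint⟩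
    obtain ⟨b, hb, hbx⟩ : ∃ b ∈ B, b ≠ x := by
      by_contra! H
      exact hne (hspan ▸ (vectorSpan_eq_bot_iff_subsingleton ℝ).2
        fun y hy z hz => (H y hy).trans (H z hz).symm)
    have hnear : ∀ᶠ t in 𝓝 (0 : ℝ), x + t • (b - x) ∈ interior A' := by
      refine (Continuous.tendsto (by fun_prop) 0).eventually ?_
      simpa using isOpen_interior.mem_nhds hxint
    obtain ⟨t, htint, ht0, ht1⟩ :=
      ((hnear.filter_mono nhdsWithin_le_nhds).and (Ioo_mem_nhdsGT one_pos)).exists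
    have htx := hBA' ⟨hB.add_smul_sub_mem hxB hb ⟨le_of_lt ht0, le_of_lt ht1⟩,
      interior_subset htint⟩
    simp [sub_eq_zero, ne_of_gt ht0, hbx] at htx
  obtain ⟨f, u, hfint, hfB⟩ := geometric_hahn_banach_open (hA.add C.convex).interior
    isOpen_interior hB hdisj
  have hfA' : ∀ x ∈ A', f x ≤ u := by
    have := closure_minimal (fun x hx => (hfint x hx).le)
      (isClosed_le f.continuous continuous_const)
    rw [(hA.add C.convex).closure_interior_eq_closure_of_nonempty_interior hint] at this
    exact fun x hx => this (subset_closure hx)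
  have hfp : f p = u := le_antisymm (hfA' p (hAA' hpA)) (hfB p hpB)
  refine ⟨f, fun a ha => hfp ▸ hfA' a (hAA' ha), fun b hb => hfp ▸ hfB b hb, ?_⟩
  obtain ⟨y, hy⟩ := hint
  obtain ⟨a, ha, c, hc, rfl⟩ := interior_subset hy
  have hfc : f c = 0 := by
    have h₁ := hfA' _ (hA'C p (hAA' hpA) c hc)
    have h₂ := hfA' _ (hA'C p (hAA' hpA) (-c) (C.neg_mem hc))
    simp only [map_add, map_neg] at h₁ h₂
    linarith
  have := hfint _ hy
  rw [map_add, hfc, add_zero] at this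
  exact ⟨a, ha, hfp ▸ this⟩

end Separation

section Refining

variable {E : Type*} [NormedAddCommGroup E] [NormedSpace ℝ E] [FiniteDimensional ℝ E]
  {V Q : Set E} {p k : E}

lemma exists_vectorSpan_minimizers_lt (hV : V.Finite) (hQ : Q = convexHull ℝ V)
    (hpar : ∀ h : E →ₗ[ℝ] ℝ, vectorSpan ℝ (maximizers Q h) = vectorSpan ℝ (minimizers Q h))
    (huniq : ∀ x ∈ Q, x + k ∈ Q → x = p) {h : E →ₗ[ℝ] ℝ} (hp : p ∈ minimizers Q h)
    (hpk : p + k ∈ maximizers Q h) (hne : vectorSpan ℝ (minimizers Q h) ≠ ⊥) :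
    ∃ h' : E →ₗ[ℝ] ℝ, p ∈ minimizers Q h' ∧ p + k ∈ maximizers Q h' ∧
      vectorSpan ℝ (minimizers Q h') < vectorSpan ℝ (minimizers Q h) := by
  have hQc : Convex ℝ Q := hQ ▸ convex_convexHull ℝ V
  have hsing : minimizers Q h ∩ (-k +ᵥ maximizers Q h) ⊆ {p} := by
    rintro x ⟨hx, g, hg, rfl⟩
    refine huniq _ hx.1 ?_
    simpa using hg.1
  obtain ⟨f, hfF, hfG, a, ha, hfa⟩ := exists_separating_of_inter_subset_singleton
    (hQc.minimizers h) ((hQc.maximizers h).vadd (-k)) hp ⟨p + k, hpk, by simp⟩ hsing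
    (by rw [vectorSpan_vadd, hpar]) hne
  obtain ⟨ε, hmin, hmax⟩ := ((eventually_minimizers_convexHull_add_smul hV h (-f)).and
    (eventually_maximizers_convexHull_add_smul hV h (-f))).exists
  rw [← hQ, minimizers_neg] at hmin
  rw [← hQ, maximizers_neg] at hmax
  refine ⟨h + ε • -f, hmin ▸ ⟨hp, hfF⟩, hmax ▸ ⟨hpk, fun g hg => ?_⟩, ?_⟩
  · simpa [add_comm] using hfG _ (vadd_mem_vadd_set (a := -k) hg)
  have hface : vectorSpan ℝ (maximizers (minimizers Q h) f) ≤ LinearMap.ker f :=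
    vectorSpan_le_ker fun x hx => le_antisymm (hfF x hx.1) (hx.2 p hp)
  rw [hmin]
  refine lt_of_le_of_ne (vectorSpan_mono ℝ (maximizers_subset _ f)) fun heq => hfa.ne ?_
  have := hface (heq ▸ vsub_mem_vectorSpan ℝ ha hp)
  simpa [sub_eq_zero] using this

theorem exists_minimizers_eq_singleton_maximizers_eq_singleton (hV : V.Finite)
    (hQ : Q = convexHull ℝ V)
    (hpar : ∀ h : E →ₗ[ℝ] ℝ, vectorSpan ℝ (maximizers Q h) = vectorSpan ℝ (minimizers Q h))
    (huniq : ∀ x ∈ Q, x + k ∈ Q → x = p) {h : E →ₗ[ℝ] ℝ} (hp : p ∈ minimizers Q h)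
    (hpk : p + k ∈ maximizers Q h) :
    ∃ g : E →ₗ[ℝ] ℝ, minimizers Q g = {p} ∧ maximizers Q g = {p + k} := by
  obtain ⟨n, hn⟩ : ∃ n, Module.finrank ℝ (vectorSpan ℝ (minimizers Q h)) = n := ⟨_, rfl⟩
  induction n using Nat.strong_induction_on generalizing h with
  | _ n ih =>
  by_cases hbot : vectorSpan ℝ (minimizers Q h) = ⊥
  · refine ⟨h, ((vectorSpan_eq_bot_iff_subsingleton ℝ).1 hbot).eq_singleton_of_mem hp, ?_⟩
    rw [← hpar] at hbot
    exact ((vectorSpan_eq_bot_iff_subsingleton ℝ).1 hbot).eq_singleton_of_mem hpk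
  obtain ⟨h', hp', hpk', hlt⟩ := exists_vectorSpan_minimizers_lt hV hQ hpar huniq hp hpk hbot
  exact ih _ (hn ▸ Submodule.finrank_lt_finrank_of_lt hlt) hp' hpk' rfl

end Refining

lemma mem_sub_singleton_iff {E : Type*} [AddGroup E] {A : Set E} {k x : E} :
    x ∈ A - {k} ↔ x + k ∈ A := by
  simp [sub_singleton, sub_eq_iff_eq_add]

section UniqueDifference

variable {E : Type*} [AddCommGroup E] [Module ℝ E]

lemma exists_inter_sub_singleton_eq_of_mem_extremePoints {A : Set E} {k : E}
    (hk : k ∈ (A - A).extremePoints ℝ) : ∃ p, A ∩ (A - {k}) = {p} := by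
  obtain ⟨a, ha, b, hb, rfl⟩ := mem_sub.1 hk.1
  refine ⟨b, subset_antisymm ?_ ?_⟩
  · rintro x ⟨hx, hxk⟩
    rw [mem_sub_singleton_iff] at hxk
    have hseg : a - b ∈ openSegment ℝ (x + (a - b) - b) (a - x) :=
      ⟨1 / 2, 1 / 2, by norm_num, by norm_num, by norm_num, by module⟩
    have := (mem_extremePoints_iff_left.1 hk).2 _ (sub_mem_sub hxk hb) _ (sub_mem_sub ha hx) hseg
    rw [mem_singleton_iff]
    linear_combination (norm := module) this
  · rintro x rfl
    exact ⟨hb, mem_sub_singleton_iff.2 (by simpa using ha)⟩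

end UniqueDifference

section Polytope

variable {D : ℕ} {Q : Set (Pt D)}

lemma suppCone_sub_singleton (Q : Set (Pt D)) (v : Pt D) :
    suppCone Q v - {v} = dirCone Q v := by
  change {v} + dirCone Q v - {v} = dirCone Q v
  rw [singleton_add, sub_singleton, image_image]
  simp

lemma singleton_sub_suppCone (Q : Set (Pt D)) (v : Pt D) :
    {v} - suppCone Q v = -dirCone Q v := by
  change {v} - ({v} + dirCone Q v) = -dirCone Q v
  rw [singleton_add, singleton_sub, image_image]
  simp

lemma IsPolytope.finite_extremePoints (hQ : IsPolytope Q) : (Q.extremePoints ℝ).Finite := by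
  obtain ⟨V, hV, rfl⟩ := hQ
  exact hV.subset extremePoints_convexHull_subset

lemma IsPolytope.convexHull_extremePoints (hQ : IsPolytope Q) :
    convexHull ℝ (Q.extremePoints ℝ) = Q := by
  have hfin := hQ.finite_extremePoints
  obtain ⟨V, hV, rfl⟩ := hQ
  rw [← (hfin.isCompact_convexHull ℝ).isClosed.closure_eq]
  exact closure_convexHull_extremePoints (hV.isCompact_convexHull ℝ) (convex_convexHull ℝ V)

lemma LocallyPointSymmetric.ne_singleton (hlps : LocallyPointSymmetric Q) (p : Pt D) :
    Q ≠ {p} := by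
  rintro rfl
  obtain ⟨σ, hσ⟩ := hlps
  obtain ⟨hσp, hne, -⟩ := hσ p (by simp [extremePoints_singleton])
  simp only [extremePoints_singleton, mem_singleton_iff] at hσp
  exact hne hσp

lemma LocallyPointSymmetric.vectorSpan_maximizers_eq (hQ : IsPolytope Q)
    (hlps : LocallyPointSymmetric Q) (h : Pt D →ₗ[ℝ] ℝ) :
    vectorSpan ℝ (maximizers Q h) = vectorSpan ℝ (minimizers Q h) := by
  obtain ⟨σ, hσ⟩ := hlps
  rcases (Q.extremePoints ℝ).eq_empty_or_nonempty with hV | hV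
  · obtain rfl : Q = ∅ := by rw [← hQ.convexHull_extremePoints, hV, convexHull_empty]
    simp [minimizers, maximizers]
  obtain ⟨w, hwV, hw⟩ := (Q.extremePoints ℝ).exists_min_image h hQ.finite_extremePoints hV
  have hwQ : w ∈ minimizers Q h := by
    rw [← hQ.convexHull_extremePoints, minimizers_convexHull hQ.finite_extremePoints]
    exact subset_convexHull ℝ _ ⟨hwV, hw⟩
  obtain ⟨hσw, -, -, -, hcone⟩ := hσ w hwV
  rw [suppCone_sub_singleton, singleton_sub_suppCone] at hcone
  exact vectorSpan_maximizers_eq_of_dirCone_eq_neg hwQ (extremePoints_subset hσw)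
    (by rw [hcone, neg_neg])

lemma StrictlyAntipodal.sub_mem_extremePoints {u v : Pt D} (h : StrictlyAntipodal Q u v) :
    u - v ∈ (Q - Q).extremePoints ℝ := by
  obtain ⟨f, -, hu, hv⟩ := h
  refine mem_extremePoints_of_maximizers_eq_singleton (f := f) ?_
  change maximizers Q f = {u} at hu
  change minimizers Q f = {v} at hv
  rw [maximizers_sub, hu, hv, singleton_sub_singleton]

lemma exists_strictlyAntipodal_of_inter_sub_singleton_eq (hQ : IsPolytope Q)
    (hlps : LocallyPointSymmetric Q) {k p : Pt D} (hp : Q ∩ (Q - {k}) = {p}) :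
    ∃ u v, u ∈ Q.extremePoints ℝ ∧ v ∈ Q.extremePoints ℝ ∧ StrictlyAntipodal Q u v ∧
      k = u - v := by
  have huniq : ∀ x ∈ Q, x + k ∈ Q → x = p :=
    fun x hx hxk => hp.subset ⟨hx, mem_sub_singleton_iff.2 hxk⟩
  obtain ⟨hpQ, hpkQ⟩ := hp.symm.subset (mem_singleton p)
  rw [mem_sub_singleton_iff] at hpkQ
  obtain ⟨g, hmin, hmax⟩ := exists_minimizers_eq_singleton_maximizers_eq_singleton
    hQ.finite_extremePoints hQ.convexHull_extremePoints.symm (hlps.vectorSpan_maximizers_eq hQ)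
    huniq (h := 0) (by simpa) (by simpa)
  have hg : g ≠ 0 := by
    rintro rfl
    exact hlps.ne_singleton p (by simpa using hmin)
  exact ⟨p + k, p, mem_extremePoints_of_maximizers_eq_singleton hmax,
    mem_extremePoints_of_minimizers_eq_singleton hmin, ⟨g, hg, hmax, hmin⟩, by abel⟩

end Polytope

theorem stmt17_general {D : ℕ} (Q : Set (Pt D)) (hQ : IsPolytope Q)
    (hlps : LocallyPointSymmetric Q) (k : Pt D) :
    ((∃ p : Pt D, Q ∩ (Q - ({k} : Set (Pt D))) = {p}) ↔
        k ∈ Set.extremePoints ℝ (Q - Q)) ∧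
    (k ∈ Set.extremePoints ℝ (Q - Q) ↔
      ∃ u v : Pt D, u ∈ Set.extremePoints ℝ Q ∧ v ∈ Set.extremePoints ℝ Q ∧
        StrictlyAntipodal Q u v ∧ k = u - v) := by
  constructor
  · refine ⟨fun ⟨p, hp⟩ => ?_, exists_inter_sub_singleton_eq_of_mem_extremePoints⟩
    obtain ⟨u, v, -, -, huv, rfl⟩ := exists_strictlyAntipodal_of_inter_sub_singleton_eq hQ hlps hp
    exact huv.sub_mem_extremePoints
  · refine ⟨fun hk => ?_, ?_⟩
    · obtain ⟨p, hp⟩ := exists_inter_sub_singleton_eq_of_mem_extremePoints hk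
      exact exists_strictlyAntipodal_of_inter_sub_singleton_eq hQ hlps hp
    · rintro ⟨u, v, -, -, huv, rfl⟩
      exact huv.sub_mem_extremePoints

/-- Let `Q` be a locally point symmetric convex polytope and
`k ∈ Q - Q`. Then the following are equivalent: (i) `Q ∩ (Q - k)` is a single point
(i.e. `k` is a uniquely formed difference); (ii) `k` is a vertex (extreme point) of
`Q - Q`; (iii) `k = u - v` for a pair of strictly antipodal vertices `u, v` of `Q`. -/
theorem stmt17 {D : ℕ} (Q : Set (Pt D)) (hQ : IsPolytope Q)
    (hlps : LocallyPointSymmetric Q) (k : Pt D) (hk : k ∈ Q - Q) :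
    ((∃ p : Pt D, Q ∩ (Q - ({k} : Set (Pt D))) = {p}) ↔
        k ∈ Set.extremePoints ℝ (Q - Q)) ∧
    (k ∈ Set.extremePoints ℝ (Q - Q) ↔
      ∃ u v : Pt D, u ∈ Set.extremePoints ℝ Q ∧ v ∈ Set.extremePoints ℝ Q ∧
        StrictlyAntipodal Q u v ∧ k = u - v) :=
  stmt17_general Q hQ hlps k
end
end

section
/- Let Q be a convex polytope in ℝ^D and let u, v be strictly antipodal vertices of Q. Then the difference u − v is uniquely formed in Q − Q: the only pair (a,b) ∈ Q × Q with a − b = u − v is (u, v). -/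
open scoped Pointwise

noncomputable section

section

variable {E G : Type*}

theorem eq_of_maximizers_eq_singleton [Preorder G] {f : E → G} {Q : Set E} {u a : E}
    (hmax : {x | x ∈ Q ∧ ∀ y ∈ Q, f y ≤ f x} = {u}) (ha : a ∈ Q) (hle : f u ≤ f a) :
    a = u := by
  have ha_max : a ∈ {x | x ∈ Q ∧ ∀ y ∈ Q, f y ≤ f x} :=
    ⟨ha, fun y hy => ((hmax.ge (Set.mem_singleton u)).2 y hy).trans hle⟩
  rwa [hmax] at ha_max

variable [AddCommGroup E] [AddCommGroup G] [PartialOrder G] [IsOrderedAddMonoid G]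
  {F : Type*} [FunLike F E G] [AddMonoidHomClass F E G]

theorem eq_and_eq_of_sub_eq_sub_of_maximizers_minimizers (f : F) {Q : Set E} {u v a b : E}
    (hmax : {x | x ∈ Q ∧ ∀ y ∈ Q, f y ≤ f x} = {u})
    (hmin : {x | x ∈ Q ∧ ∀ y ∈ Q, f x ≤ f y} = {v})
    (ha : a ∈ Q) (hb : b ∈ Q) (hab : a - b = u - v) : a = u ∧ b = v := by
  have hu : ∀ y ∈ Q, f y ≤ f u := (hmax.ge (Set.mem_singleton u)).2
  have hv : ∀ y ∈ Q, f v ≤ f y := (hmin.ge (Set.mem_singleton v)).2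
  have hf : f a - f b = f u - f v := by rw [← map_sub, ← map_sub, hab]
  have hfa : f u ≤ f a := by
    calc f u = f a - f b + f v := by rw [hf, sub_add_cancel]
      _ ≤ f a - f v + f v := by gcongr; exact hv b hb
      _ = f a := sub_add_cancel _ _
  have hfb : f b ≤ f v := by
    calc f b = f a - (f u - f v) := by rw [← hf, sub_sub_cancel]
      _ ≤ f u - (f u - f v) := by gcongr; exact hu a ha
      _ = f v := sub_sub_cancel _ _
  exact ⟨eq_of_maximizers_eq_singleton hmax ha hfa,
    eq_of_maximizers_eq_singleton (G := Gᵒᵈ) hmin hb hfb⟩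

end

theorem stmt18_general {D : ℕ} (Q : Set (Pt D))
    (u v : Pt D)
    (h : StrictlyAntipodal Q u v) :
    ∀ a ∈ Q, ∀ b ∈ Q, a - b = u - v → a = u ∧ b = v := by
  obtain ⟨f, -, hmax, hmin⟩ := h
  exact fun a ha b hb => eq_and_eq_of_sub_eq_sub_of_maximizers_minimizers f hmax hmin ha hb

/-- If `u` and `v` are strictly antipodal vertices of a convex polytope
`Q`, then `u - v` is uniquely formed in `Q - Q`. -/
theorem stmt18 {D : ℕ} (Q : Set (Pt D)) (hQ : IsPolytope Q)
    (u v : Pt D) (hu : u ∈ Set.extremePoints ℝ Q) (hv : v ∈ Set.extremePoints ℝ Q)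
    (h : StrictlyAntipodal Q u v) :
    ∀ a ∈ Q, ∀ b ∈ Q, a - b = u - v → a = u ∧ b = v :=
  stmt18_general Q u v h
end
end
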